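/- arXiv:2403.12341 — 8 statements merged into one kernel-verified Lean document; each statement's English description precedes it below -/
import Mathlib

section
/- Let x be irrational and v = (p, q) ∈ Z² a nonzero primitive vector with p ≡ 0 mod 2 (i.e. v ∈ Λ^(0)). If the parallelogram P_B(x, v) = {a(p − qx, 0) + b(qx, q) : −1 ≤ a, b ≤ 1} contains no primitive vector of Λ^(0) other than v, −v, and 0, then the parallelogram P_S(x, v) = {a(p − qx, 0) + b(qx, q) : 0 ≤ a, b ≤ 1} contains no vector of Z² other than v and 0. -/
/-- A nonzero integral vector is primitive if it is not a multiple `c • w` with `c ≥ 2`. -/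
def IsPrimitiveVec (v : ℤ × ℤ) : Prop :=
  v ≠ 0 ∧ ∀ c : ℤ, 2 ≤ c → ∀ w : ℤ × ℤ, v ≠ c • w

/-- Membership of an integral vector `u` in the closed parallelogram
`P_B(x, v) = {a(p − qx, 0) + b(qx, q) : −1 ≤ a, b ≤ 1}` where `v = (p, q)`. -/
def MemPB (x : ℝ) (v u : ℤ × ℤ) : Prop :=
  ∃ a b : ℝ, -1 ≤ a ∧ a ≤ 1 ∧ -1 ≤ b ∧ b ≤ 1 ∧
    (u.1 : ℝ) = a * ((v.1 : ℝ) - (v.2 : ℝ) * x) + b * ((v.2 : ℝ) * x) ∧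
    (u.2 : ℝ) = b * (v.2 : ℝ)

/-- Membership in `P_S(x, v) = {a(p − qx, 0) + b(qx, q) : 0 ≤ a, b ≤ 1}`. -/
def MemPS (x : ℝ) (v u : ℤ × ℤ) : Prop :=
  ∃ a b : ℝ, 0 ≤ a ∧ a ≤ 1 ∧ 0 ≤ b ∧ b ≤ 1 ∧
    (u.1 : ℝ) = a * ((v.1 : ℝ) - (v.2 : ℝ) * x) + b * ((v.2 : ℝ) * x) ∧
    (u.2 : ℝ) = b * (v.2 : ℝ)

/-! For `u ∈ P_S(x, v)` put `w = 2u - v`; the affine change `a, b ↦ 2a - 1, 2b - 1` shows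
`w ∈ P_B(x, v)`. A primitive `v` with even `p` has odd `q`, so `w` has even first and odd second
coordinate; writing `w = d w'` with `w'` primitive and `d ≥ 1`, `d` is odd, hence `w' ∈ Λ^(0)`,
and `w' ∈ P_B(x, v)` because `P_B` is convex and symmetric. Thus `w' = ±v`, and comparing second
coordinates gives `|d q| ≤ |q|`, so `d = 1` and `2u - v = ±v`, i.e. `u = v` or `u = 0`. -/

lemma isPrimitiveVec_iff_gcd_eq_one (u : ℤ × ℤ) : IsPrimitiveVec u ↔ Int.gcd u.1 u.2 = 1 := by
  constructor
  · rintro ⟨hne, hmul⟩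
    by_contra hg
    have hg0 : Int.gcd u.1 u.2 ≠ 0 := fun h ↦ hne (Prod.ext_iff.2 (Int.gcd_eq_zero_iff.1 h))
    refine hmul (Int.gcd u.1 u.2) (by omega) (u.1 / Int.gcd u.1 u.2, u.2 / Int.gcd u.1 u.2) ?_
    ext
    · exact (Int.mul_ediv_cancel' (Int.gcd_dvd_left _ _)).symm
    · exact (Int.mul_ediv_cancel' (Int.gcd_dvd_right _ _)).symm
  · intro hg
    refine ⟨fun h ↦ by simp [h] at hg, fun c hc w hw ↦ ?_⟩
    have hdvd : c ∣ (Int.gcd u.1 u.2 : ℤ) :=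
      Int.dvd_coe_gcd ⟨w.1, congrArg Prod.fst hw⟩ ⟨w.2, congrArg Prod.snd hw⟩
    rw [hg] at hdvd
    have := Int.le_of_dvd one_pos hdvd
    omega

lemma IsPrimitiveVec.ne_zero {u : ℤ × ℤ} (hu : IsPrimitiveVec u) : u ≠ 0 := hu.1

lemma IsPrimitiveVec.odd_snd_of_even_fst {u : ℤ × ℤ} (hu : IsPrimitiveVec u) (h1 : Even u.1) :
    Odd u.2 := by
  rw [← Int.not_even_iff_odd]
  intro h2
  have h := Int.dvd_coe_gcd (even_iff_two_dvd.1 h1) (even_iff_two_dvd.1 h2)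
  rw [(isPrimitiveVec_iff_gcd_eq_one u).1 hu] at h
  omega

lemma exists_eq_smul_isPrimitiveVec {w : ℤ × ℤ} (hw : w ≠ 0) :
    ∃ d : ℤ, 0 < d ∧ ∃ w' : ℤ × ℤ, IsPrimitiveVec w' ∧ w = d • w' := by
  have hd : 0 < Int.gcd w.1 w.2 :=
    Nat.pos_of_ne_zero fun h ↦ hw (Prod.ext_iff.2 (Int.gcd_eq_zero_iff.1 h))
  refine ⟨Int.gcd w.1 w.2, by exact_mod_cast hd,
    (w.1 / Int.gcd w.1 w.2, w.2 / Int.gcd w.1 w.2), ?_, ?_⟩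
  · exact (isPrimitiveVec_iff_gcd_eq_one _).2 (Int.gcd_div_gcd_div_gcd hd)
  · ext
    · exact (Int.mul_ediv_cancel' (Int.gcd_dvd_left _ _)).symm
    · exact (Int.mul_ediv_cancel' (Int.gcd_dvd_right _ _)).symm

lemma MemPB.of_smul {x : ℝ} {v w : ℤ × ℤ} {d : ℤ} (hd : d ≠ 0) (h : MemPB x v (d • w)) :
    MemPB x v w := by
  obtain ⟨a, b, ha₀, ha₁, hb₀, hb₁, h1, h2⟩ := h
  have hdR : (d : ℝ) ≠ 0 := Int.cast_ne_zero.2 hd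
  have hd1 : 1 ≤ |(d : ℝ)| := by exact_mod_cast Int.one_le_abs hd
  have hdiv : ∀ t : ℝ, -1 ≤ t → t ≤ 1 → -1 ≤ t / d ∧ t / d ≤ 1 := fun t ht₀ ht₁ ↦ by
    rw [← abs_le, abs_div]
    exact div_le_one_of_le₀ ((abs_le.2 ⟨ht₀, ht₁⟩).trans hd1) (abs_nonneg _)
  refine ⟨a / d, b / d, (hdiv a ha₀ ha₁).1, (hdiv a ha₀ ha₁).2, (hdiv b hb₀ hb₁).1,
    (hdiv b hb₀ hb₁).2, ?_, ?_⟩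
  · simp only [Prod.smul_fst, smul_eq_mul, Int.cast_mul] at h1
    field_simp
    linear_combination h1
  · simp only [Prod.smul_snd, smul_eq_mul, Int.cast_mul] at h2
    field_simp
    linear_combination h2

lemma MemPB.abs_snd_le {x : ℝ} {v w : ℤ × ℤ} (h : MemPB x v w) : |w.2| ≤ |v.2| := by
  obtain ⟨a, b, -, -, hb₀, hb₁, -, h2⟩ := h
  have : |(w.2 : ℝ)| ≤ |(v.2 : ℝ)| := by
    rw [h2, abs_mul]
    exact mul_le_of_le_one_left (abs_nonneg _) (abs_le.2 ⟨hb₀, hb₁⟩)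
  exact_mod_cast this

lemma MemPS.memPB_two_smul_sub {x : ℝ} {v u : ℤ × ℤ} (h : MemPS x v u) :
    MemPB x v (2 • u - v) := by
  obtain ⟨a, b, ha₀, ha₁, hb₀, hb₁, h1, h2⟩ := h
  refine ⟨2 * a - 1, 2 * b - 1, by linarith, by linarith, by linarith, by linarith, ?_, ?_⟩
  · rw [Prod.fst_sub, Prod.smul_fst, two_nsmul]
    push_cast
    linear_combination 2 * h1
  · rw [Prod.snd_sub, Prod.smul_snd, two_nsmul]
    push_cast
    linear_combination 2 * h2

lemma eq_one_of_smul_memPB {x : ℝ} {v w : ℤ × ℤ} {d : ℤ} (hd : 0 < d) (hv : v.2 ≠ 0)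
    (hw : w = v ∨ w = -v) (h : MemPB x v (d • w)) : d = 1 := by
  have hle := h.abs_snd_le
  have hw2 : |w.2| = |v.2| := by rcases hw with rfl | rfl <;> simp
  rw [Prod.smul_snd, smul_eq_mul, abs_mul, hw2, abs_of_pos hd] at hle
  have := abs_pos.2 hv
  nlinarith

lemma even_fst_of_smul {d : ℤ} {w : ℤ × ℤ} (h₁ : Even (d • w).1) (h₂ : Odd (d • w).2) :
    Even w.1 := by
  rw [Prod.smul_fst, smul_eq_mul, Int.even_mul] at h₁
  rw [Prod.smul_snd, smul_eq_mul, Int.odd_mul] at h₂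
  exact h₁.resolve_left (Int.not_even_iff_odd.2 h₂.1)

theorem PS_trivial_of_PB_no_primitive_Lambda0_general
    (x : ℝ) (v : ℤ × ℤ) (hv : IsPrimitiveVec v) (hΛ : Even v.1)
    (hB : ∀ u : ℤ × ℤ, IsPrimitiveVec u → Even u.1 → MemPB x v u →
      u = v ∨ u = -v ∨ u = 0) :
    ∀ u : ℤ × ℤ, MemPS x v u → u = v ∨ u = 0 := by
  intro u hu
  have hq : Odd v.2 := hv.odd_snd_of_even_fst hΛ
  have hw₁ : Even (2 • u - v).1 := by
    rw [Prod.fst_sub, Prod.smul_fst, two_nsmul]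
    exact Even.sub ⟨u.1, rfl⟩ hΛ
  have hw₂ : Odd (2 • u - v).2 := by
    rw [Prod.snd_sub, Prod.smul_snd, two_nsmul]
    exact Even.sub_odd ⟨u.2, rfl⟩ hq
  obtain ⟨d, hd, w, hw, hdw⟩ := exists_eq_smul_isPrimitiveVec (w := 2 • u - v)
    fun h ↦ by rw [h] at hw₂; simp at hw₂
  rw [hdw] at hw₁ hw₂
  have hwB : MemPB x v (d • w) := hdw ▸ hu.memPB_two_smul_sub
  have hwv : w = v ∨ w = -v := (hB w hw (even_fst_of_smul hw₁ hw₂) (hwB.of_smul hd.ne')).imp_right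
    (·.resolve_right hw.ne_zero)
  rw [eq_one_of_smul_memPB hd (fun h ↦ by simp [h] at hq) hwv hwB, one_smul,
    sub_eq_iff_eq_add] at hdw
  rcases hwv with rfl | rfl
  · exact Or.inl (nsmul_right_injective two_ne_zero (hdw.trans (two_nsmul w).symm))
  · rw [neg_add_cancel] at hdw
    exact Or.inr ((smul_eq_zero.1 hdw).resolve_left two_ne_zero)

/-- Lemma, part (i), for `Λ^(0)`: if `P_B(x,v)` contains no primitive
vector of `Λ^(0)` other than `v`, `−v`, `0`, then `P_S(x,v)` contains no vector of `ℤ²`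
other than `v` and `0`. -/
theorem PS_trivial_of_PB_no_primitive_Lambda0
    (x : ℝ) (hx : Irrational x) (v : ℤ × ℤ) (hv : IsPrimitiveVec v) (hΛ : Even v.1)
    (hB : ∀ u : ℤ × ℤ, IsPrimitiveVec u → Even u.1 → MemPB x v u →
      u = v ∨ u = -v ∨ u = 0) :
    ∀ u : ℤ × ℤ, MemPS x v u → u = v ∨ u = 0 :=
  PS_trivial_of_PB_no_primitive_Lambda0_general x v hv hΛ hB
end

section
/- Let x be irrational and v ∈ Z² a nonzero primitive vector lying in Λ^(α) for some α ∈ {0, 1, ∞}. If the parallelogram P_S(x, v) contains no vector of Z² other than v and 0, then P_B(x, v) contains no primitive vector of Λ^(α) other than v, −v, and 0. -/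
/-- The index-2 sublattices `Λ^(0)`, `Λ^(1)`, `Λ^(∞)` of `ℤ²` (indexed by `0,1,2`). -/
def LambdaClass : Fin 3 → ℤ × ℤ → Prop
  | 0, u => Even u.1
  | 1, u => Even (u.1 + u.2)
  | 2, u => Even u.2

lemma IsPrimitiveVec.not_even_and_even {v : ℤ × ℤ} (hv : IsPrimitiveVec v) :
    ¬ (Even v.1 ∧ Even v.2) := by
  rintro ⟨⟨k, hk⟩, ⟨m, hm⟩⟩
  refine hv.2 2 le_rfl (k, m) ?_
  ext <;> simp only [Prod.smul_fst, Prod.smul_snd, smul_eq_mul] <;> omega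

lemma exists_two_smul_eq_add_of_isPrimitiveVec {α : Fin 3} {u v : ℤ × ℤ}
    (hu : IsPrimitiveVec u) (hv : IsPrimitiveVec v) (hΛu : LambdaClass α u)
    (hΛv : LambdaClass α v) : ∃ w : ℤ × ℤ, u + v = (2 : ℤ) • w := by
  have hu' := hu.not_even_and_even
  have hv' := hv.not_even_and_even
  have hsum_even : Even (u.1 + v.1) ∧ Even (u.2 + v.2) := by
    fin_cases α <;> simp only [LambdaClass, Int.even_iff] at hΛu hΛv hu' hv' ⊢ <;> omega
  obtain ⟨⟨k, hk⟩, ⟨m, hm⟩⟩ := hsum_even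
  exact ⟨(k, m), by ext <;> simp only [Prod.fst_add, Prod.snd_add, Prod.smul_fst,
    Prod.smul_snd, smul_eq_mul] <;> omega⟩

lemma memPS_of_memPB_of_add_eq_two_smul {x : ℝ} {u v w : ℤ × ℤ} (hu : MemPB x v u)
    (huv : u + v = (2 : ℤ) • w) : MemPS x v w := by
  obtain ⟨a, b, ha₀, ha₁, hb₀, hb₁, hu₁, hu₂⟩ := hu
  have hw₁ : (u.1 : ℝ) + v.1 = 2 * w.1 := by exact_mod_cast congrArg Prod.fst huv
  have hw₂ : (u.2 : ℝ) + v.2 = 2 * w.2 := by exact_mod_cast congrArg Prod.snd huv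
  refine ⟨(a + 1) / 2, (b + 1) / 2, by linarith, by linarith, by linarith, by linarith, ?_, ?_⟩
  · linear_combination hu₁ / 2 - hw₁ / 2
  · linear_combination hu₂ / 2 - hw₂ / 2

theorem PB_no_primitive_Lambda_of_PS_trivial_general
    (x : ℝ) (α : Fin 3) (v : ℤ × ℤ)
    (hv : IsPrimitiveVec v) (hΛ : LambdaClass α v)
    (hS : ∀ u : ℤ × ℤ, MemPS x v u → u = v ∨ u = 0) :
    ∀ u : ℤ × ℤ, IsPrimitiveVec u → LambdaClass α u → MemPB x v u →
      u = v ∨ u = -v ∨ u = 0 := by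
  intro u hu hΛu hB
  obtain ⟨w, huv⟩ := exists_two_smul_eq_add_of_isPrimitiveVec hu hv hΛu hΛ
  rcases hS w (memPS_of_memPB_of_add_eq_two_smul hB huv) with rfl | rfl
  · left
    rw [two_smul] at huv
    exact add_right_cancel huv
  · right; left
    rw [smul_zero] at huv
    exact eq_neg_of_add_eq_zero_left huv

/-- Lemma, part (ii), first assertion: if `P_S(x,v)` contains no vector
of `ℤ²` other than `v` and `0`, then `P_B(x,v)` contains no primitive vector of
`Λ^(α)` other than `v`, `−v`, `0`. -/
theorem PB_no_primitive_Lambda_of_PS_trivial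
    (x : ℝ) (hx : Irrational x) (α : Fin 3) (v : ℤ × ℤ)
    (hv : IsPrimitiveVec v) (hΛ : LambdaClass α v)
    (hS : ∀ u : ℤ × ℤ, MemPS x v u → u = v ∨ u = 0) :
    ∀ u : ℤ × ℤ, IsPrimitiveVec u → LambdaClass α u → MemPB x v u →
      u = v ∨ u = -v ∨ u = 0 :=
  PB_no_primitive_Lambda_of_PS_trivial_general x α v hv hΛ hS
end

section
/- Let x be irrational and v ∈ Z² nonzero primitive. If P_S(x, v) contains no vector of Z² other than v and 0, then any two nonzero vectors u, u' of Z² lying in P_B(x, v), other than v and −v, are parallel: u = c·u' for some rational constant c. -/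
def PSTrivial (x : ℝ) (v : ℤ × ℤ) : Prop :=
  ∀ u : ℤ × ℤ, MemPS x v u → u = v ∨ u = 0

def HasCoords (x : ℝ) (v u : ℤ × ℤ) (a b : ℝ) : Prop :=
  (u.1 : ℝ) = a * ((v.1 : ℝ) - (v.2 : ℝ) * x) + b * ((v.2 : ℝ) * x) ∧
    (u.2 : ℝ) = b * (v.2 : ℝ)

def MemMixed (x : ℝ) (v u : ℤ × ℤ) : Prop :=
  ∃ a b : ℝ, -1 ≤ a ∧ a < 0 ∧ 0 < b ∧ b ≤ 1 ∧ HasCoords x v u a b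

namespace HasCoords

variable {x : ℝ} {v u u' : ℤ × ℤ} {a a' b b' : ℝ}

theorem neg (h : HasCoords x v u a b) : HasCoords x v (-u) (-a) (-b) := by
  obtain ⟨h₁, h₂⟩ := h
  constructor <;> push_cast [Prod.fst_neg, Prod.snd_neg]
  · linear_combination -h₁
  · linear_combination -h₂

theorem sub (h : HasCoords x v u a b) (h' : HasCoords x v u' a' b') :
    HasCoords x v (u - u') (a - a') (b - b') := by
  obtain ⟨h₁, h₂⟩ := h
  obtain ⟨h₁', h₂'⟩ := h'
  constructor <;> push_cast [Prod.fst_sub, Prod.snd_sub]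
  · linear_combination h₁ - h₁'
  · linear_combination h₂ - h₂'

theorem snd_eq_zero (h : HasCoords x v u a b) (hq : v.2 = 0) : HasCoords x v u a 0 := by
  obtain ⟨h₁, h₂⟩ := h
  simp_all [HasCoords]

end HasCoords

section

variable {x : ℝ} {v u u' : ℤ × ℤ} {a a' b b' : ℝ}

theorem coords_opposite_sign (hS : PSTrivial x v) (h : HasCoords x v u a b)
    (ha₁ : -1 ≤ a) (ha₂ : a ≤ 1) (hb₁ : -1 ≤ b) (hb₂ : b ≤ 1)
    (hu0 : u ≠ 0) (huv : u ≠ v) (hunv : u ≠ -v) : (a < 0 ∧ 0 < b) ∨ (0 < a ∧ b < 0) := by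
  have hpos : ¬(0 ≤ a ∧ 0 ≤ b) := fun ⟨ha, hb⟩ =>
    (hS u ⟨a, b, ha, ha₂, hb, hb₂, h⟩).elim huv hu0
  have hneg : ¬(a ≤ 0 ∧ b ≤ 0) := fun ⟨ha, hb⟩ =>
    (hS (-u) ⟨-a, -b, by linarith, by linarith, by linarith, by linarith, h.neg⟩).elim
      (fun h => hunv (neg_eq_iff_eq_neg.mp h)) (fun h => hu0 (neg_eq_zero.mp h))
  rcases lt_or_ge a 0 with ha | ha
  · exact .inl ⟨ha, not_le.mp fun hb => hneg ⟨ha.le, hb⟩⟩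
  · have hb : b < 0 := not_le.mp fun hb => hpos ⟨ha, hb⟩
    exact .inr ⟨ha.lt_of_ne fun h0 => hneg ⟨h0.ge, hb.le⟩, hb⟩

theorem snd_ne_zero_of_memPB (hS : PSTrivial x v) (hu : MemPB x v u)
    (hu0 : u ≠ 0) (huv : u ≠ v) (hunv : u ≠ -v) : v.2 ≠ 0 ∧ u.2 ≠ 0 := by
  obtain ⟨a, b, ha₁, ha₂, hb₁, hb₂, h : HasCoords x v u a b⟩ := hu
  -- if `q = 0` then `b` is arbitrary, and `b = 0` violates the sign condition
  have hq : v.2 ≠ 0 := fun hq => by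
    simpa using coords_opposite_sign hS (h.snd_eq_zero hq) ha₁ ha₂ (by norm_num) (by norm_num)
      hu0 huv hunv
  have hb : b ≠ 0 := by
    rcases coords_opposite_sign hS h ha₁ ha₂ hb₁ hb₂ hu0 huv hunv with ⟨-, hb⟩ | ⟨-, hb⟩
    exacts [hb.ne', hb.ne]
  refine ⟨hq, fun hu2 => mul_ne_zero hb (Int.cast_ne_zero.mpr hq) ?_⟩
  rw [← h.2, hu2, Int.cast_zero]

theorem memMixed_or_neg_memMixed (hS : PSTrivial x v) (hu : MemPB x v u)
    (hu0 : u ≠ 0) (huv : u ≠ v) (hunv : u ≠ -v) :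
    MemMixed x v u ∨ MemMixed x v (-u) := by
  obtain ⟨a, b, ha₁, ha₂, hb₁, hb₂, h : HasCoords x v u a b⟩ := hu
  rcases coords_opposite_sign hS h ha₁ ha₂ hb₁ hb₂ hu0 huv hunv with ⟨ha, hb⟩ | ⟨ha, hb⟩
  · exact .inl ⟨a, b, ha₁, ha, hb, hb₂, h⟩
  · exact .inr ⟨-a, -b, by linarith, by linarith, by linarith, by linarith, h.neg⟩

theorem eq_zero_of_hasCoords (hS : PSTrivial x v)
    (hq : (v.2 : ℝ) ≠ 0) (h : HasCoords x v u a b) (ha : 0 ≤ a) (ha' : a ≤ 1) (hb : 0 ≤ b)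
    (hb' : b < 1) : u = 0 := by
  refine (hS u ⟨a, b, ha, ha', hb, hb'.le, h⟩).resolve_left fun huv => hb'.ne ?_
  refine mul_right_cancel₀ hq ?_
  rw [← h.2, huv, one_mul]

theorem eq_of_hasCoords_of_abs_sub_le (hS : PSTrivial x v)
    (hq : (v.2 : ℝ) ≠ 0) (h : HasCoords x v u a b) (h' : HasCoords x v u' a' b)
    (ha : |a - a'| ≤ 1) : u = u' := by
  have hd := h.sub h'
  have hd' := h'.sub h
  rw [sub_self] at hd hd'
  obtain ⟨ha₁, ha₂⟩ := abs_sub_le_iff.mp ha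
  rcases le_total 0 (a - a') with hle | hle
  · exact sub_eq_zero.mp (eq_zero_of_hasCoords hS hq hd hle ha₁ le_rfl one_pos)
  · exact (sub_eq_zero.mp (eq_zero_of_hasCoords hS hq hd' (by linarith) ha₂ le_rfl one_pos)).symm

theorem sub_memMixed (hS : PSTrivial x v)
    (hq : (v.2 : ℝ) ≠ 0) (h : HasCoords x v u a b) (h' : HasCoords x v u' a' b')
    (ha₁ : -1 ≤ a) (ha₂ : a < 0) (ha₁' : -1 ≤ a') (ha₂' : a' < 0) (hb : 0 < b) (hb' : b' ≤ 1)
    (hbb : b < b') : MemMixed x v (u' - u) := by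
  have hd := h'.sub h
  refine ⟨a' - a, b' - b, by linarith, ?_, by linarith, by linarith, hd⟩
  by_contra! ha
  have h0 := eq_zero_of_hasCoords hS hq hd ha (by linarith) (by linarith) (by linarith)
  refine mul_ne_zero (sub_pos.mpr hbb).ne' hq ?_
  rw [← hd.2, h0, Prod.snd_zero, Int.cast_zero]

theorem natAbs_snd_sub_lt (hq : (v.2 : ℝ) ≠ 0) (h : HasCoords x v u a b)
    (h' : HasCoords x v u' a' b') (hb : 0 < b) (hbb : b < b') :
    (u' - u).2.natAbs < u'.2.natAbs := by
  have hlt : |((u' - u).2 : ℝ)| < |(u'.2 : ℝ)| := by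
    rw [(h'.sub h).2, h'.2, abs_mul, abs_mul, abs_of_pos (sub_pos.mpr hbb),
      abs_of_pos (hb.trans hbb)]
    exact mul_lt_mul_of_pos_right (by linarith) (abs_pos.mpr hq)
  rw [← Int.cast_abs, ← Int.cast_abs, Int.cast_lt, Int.abs_eq_natAbs, Int.abs_eq_natAbs] at hlt
  exact_mod_cast hlt

theorem cross_eq_zero_of_memMixed (hS : PSTrivial x v)
    (hq : (v.2 : ℝ) ≠ 0) {u u' : ℤ × ℤ} (hu : MemMixed x v u) (hu' : MemMixed x v u') :
    u.1 * u'.2 = u.2 * u'.1 := by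
  obtain ⟨a, b, ha₁, ha₂, hb₁, hb₂, h⟩ := hu
  obtain ⟨a', b', ha₁', ha₂', hb₁', hb₂', h'⟩ := hu'
  -- the facts `hlt` below are what `decreasing_by` uses
  rcases lt_trichotomy b b' with hbb | rfl | hbb
  · have hlt := natAbs_snd_sub_lt hq h h' hb₁ hbb
    have := cross_eq_zero_of_memMixed hS hq ⟨a, b, ha₁, ha₂, hb₁, hb₂, h⟩
      (sub_memMixed hS hq h h' ha₁ ha₂ ha₁' ha₂' hb₁ hb₂' hbb)
    simp only [Prod.fst_sub, Prod.snd_sub] at this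
    linear_combination this
  · rw [eq_of_hasCoords_of_abs_sub_le hS hq h h' (abs_sub_le_iff.mpr ⟨by linarith, by linarith⟩)]
    ring
  · have hlt := natAbs_snd_sub_lt hq h' h hb₁' hbb
    have := cross_eq_zero_of_memMixed hS hq
      (sub_memMixed hS hq h' h ha₁' ha₂' ha₁ ha₂ hb₁' hb₂ hbb) ⟨a', b', ha₁', ha₂', hb₁', hb₂', h'⟩
    simp only [Prod.fst_sub, Prod.snd_sub] at this
    linear_combination this
termination_by u.2.natAbs + u'.2.natAbs
decreasing_by all_goals omega

theorem cross_eq_zero_of_memPB (hS : PSTrivial x v)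
    (hq : (v.2 : ℝ) ≠ 0) (hu : MemPB x v u) (hu' : MemPB x v u') (hu0 : u ≠ 0) (huv : u ≠ v)
    (hunv : u ≠ -v) (hu'0 : u' ≠ 0) (hu'v : u' ≠ v) (hu'nv : u' ≠ -v) :
    u.1 * u'.2 = u.2 * u'.1 := by
  rcases memMixed_or_neg_memMixed hS hu hu0 huv hunv with h | h <;>
  rcases memMixed_or_neg_memMixed hS hu' hu'0 hu'v hu'nv with h' | h' <;>
  have := cross_eq_zero_of_memMixed hS hq h h' <;>
  (try simp only [Prod.fst_neg, Prod.snd_neg, neg_mul, mul_neg, neg_neg] at this) <;>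
  linarith

end

theorem exists_rat_of_cross_eq_zero {u u' : ℤ × ℤ} (h : u.1 * u'.2 = u.2 * u'.1)
    (h' : u'.2 ≠ 0) : ∃ c : ℚ, (u.1 : ℚ) = c * u'.1 ∧ (u.2 : ℚ) = c * u'.2 := by
  have hq : (u'.2 : ℚ) ≠ 0 := Int.cast_ne_zero.mpr h'
  refine ⟨u.2 / u'.2, ?_, by field_simp⟩
  rw [div_mul_eq_mul_div, eq_div_iff hq]
  exact_mod_cast h

theorem PB_vectors_parallel_of_PS_trivial_general
    (x : ℝ) (v : ℤ × ℤ)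
    (hS : ∀ u : ℤ × ℤ, MemPS x v u → u = v ∨ u = 0) :
    ∀ u u' : ℤ × ℤ, u ≠ 0 → u' ≠ 0 → u ≠ v → u ≠ -v → u' ≠ v → u' ≠ -v →
      MemPB x v u → MemPB x v u' →
      ∃ c : ℚ, (u.1 : ℚ) = c * (u'.1 : ℚ) ∧ (u.2 : ℚ) = c * (u'.2 : ℚ) := by
  intro u u' hu0 hu'0 huv hunv hu'v hu'nv hu hu'
  obtain ⟨hq, -⟩ := snd_ne_zero_of_memPB hS hu hu0 huv hunv
  exact exists_rat_of_cross_eq_zero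
    (cross_eq_zero_of_memPB hS (Int.cast_ne_zero.mpr hq) hu hu' hu0 huv hunv hu'0 hu'v hu'nv)
    (snd_ne_zero_of_memPB hS hu' hu'0 hu'v hu'nv).2

/-- Lemma, part (ii), second assertion: if `P_S(x,v)` contains no vector
of `ℤ²` other than `v` and `0`, then any two nonzero vectors of `ℤ²` in `P_B(x,v)`
besides `v`, `−v` are parallel. -/
theorem PB_vectors_parallel_of_PS_trivial
    (x : ℝ) (hx : Irrational x) (v : ℤ × ℤ) (hv : IsPrimitiveVec v)
    (hS : ∀ u : ℤ × ℤ, MemPS x v u → u = v ∨ u = 0) :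
    ∀ u u' : ℤ × ℤ, u ≠ 0 → u' ≠ 0 → u ≠ v → u ≠ -v → u' ≠ v → u' ≠ -v →
      MemPB x v u → MemPB x v u' →
      ∃ c : ℚ, (u.1 : ℚ) = c * (u'.1 : ℚ) ∧ (u.2 : ℚ) = c * (u'.2 : ℚ) :=
  PB_vectors_parallel_of_PS_trivial_general x v hS
end

section
/- For any irrational x and α ∈ {0, 1, ∞}, the set of best (α)-rational approximations of x equals the set of best signed approximations of x that lie in Q^(α): B^(α)(x) = S(x) ∩ Q^(α). -/
/-- Parity classes of rationals (in lowest terms): `0` is even/odd, `1` is odd/odd,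
`2` (for ∞) is odd/even. -/
def QParity : Fin 3 → ℚ → Prop
  | 0, r => Even r.num ∧ Odd (r.den : ℤ)
  | 1, r => Odd r.num ∧ Odd (r.den : ℤ)
  | 2, r => Odd r.num ∧ Even (r.den : ℤ)

/-- `r = p/q` is a best signed approximation of `x`. -/
def IsBestSignedApprox (x : ℝ) (r : ℚ) : Prop :=
  ∀ s : ℚ, s.den ≤ r.den → s ≠ r →
    Real.sign ((s.den : ℝ) * x - s.num) = Real.sign ((r.den : ℝ) * x - r.num) →
    |(r.den : ℝ) * x - r.num| < |(s.den : ℝ) * x - s.num|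

/-- `r` is a best `(α)`-rational approximation of `x`. -/
def IsBestClassApprox (α : Fin 3) (x : ℝ) (r : ℚ) : Prop :=
  QParity α r ∧ ∀ s : ℚ, QParity α s → s.den ≤ r.den → s ≠ r →
    |(r.den : ℝ) * x - r.num| < |(s.den : ℝ) * x - s.num|

/-! Write `e(p/q) = q x - p`. Every integer pair `(n, d)` with `d > 0` is `g • (t.num, t.den)` for a
reduced `t` and some `g ≥ 1`, so `e(t) = (d x - n) / g` has the sign of `d x - n`, satisfies
`|e(t)| ≤ |d x - n|`, and, when `n, d` are not both even, `g` is odd and `t` has the parities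
of `(n, d)`.
Hence a best approximation `r = p/q` of either kind has `|e(r)| ≤ |d x - n|` for every pair with
`0 < d ≤ q` that is congruent to `(p, q)` mod 2, resp. whose error has the sign of `e(r)`.

If `r` is a best `(α)`-approximation and `a/b` has the same sign and `|e(a/b)| ≤ |e(r)|`, the pair
`±(p - 2a, q - 2b)` is congruent to `(p, q)` with error `±(e(r) - 2 e(a/b))`, smaller than `|e(r)|`.
If `r` is a best signed approximation and `a/b` is in the same class with opposite sign, then
`((p - a)/2, (q - b)/2)` is an integer pair with error `(e(r) - e(a/b))/2` of the sign of `e(r)`,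
forcing `|e(a/b)| ≥ |e(r)|`; equality would make `x` rational. The degenerate cases `q = 2b`,
resp. `q = b`, follow from `|e(r)| ≤ 1`, which both kinds of best approximation satisfy. -/

lemma Rat.not_even_num_and_even_den (r : ℚ) : ¬ (Even r.num ∧ Even (r.den : ℤ)) := by
  rintro ⟨hnum, h⟩
  have h2 : 2 ∣ Nat.gcd r.num.natAbs r.den :=
    Nat.dvd_gcd (Int.natAbs_dvd_natAbs.2 hnum.two_dvd) (by exact_mod_cast h.two_dvd)
  rw [r.reduced] at h2
  omega

lemma QParity.of_even_sub {α : Fin 3} {r t : ℚ} (hr : QParity α r)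
    (hnum : Even (t.num - r.num)) (hden : Even ((t.den : ℤ) - r.den)) : QParity α t := by
  rw [Int.even_sub] at hnum hden
  fin_cases α <;> simp only [QParity, ← Int.not_even_iff_odd] at hr ⊢ <;> tauto

lemma QParity.even_sub {α : Fin 3} {s r : ℚ} (hs : QParity α s) (hr : QParity α r) :
    Even (s.num - r.num) ∧ Even ((s.den : ℤ) - r.den) := by
  rw [Int.even_sub, Int.even_sub]
  fin_cases α <;> simp only [QParity, ← Int.not_even_iff_odd] at hs hr <;> tauto

lemma Irrational.eq_zero_of_mul_sub_eq_zero {x : ℝ} (hx : Irrational x) {d n : ℤ}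
    (h : (d : ℝ) * x - n = 0) : d = 0 ∧ n = 0 := by
  by_contra hdn
  have hd : d ≠ 0 := by
    rintro rfl
    exact hdn ⟨rfl, by exact_mod_cast (by simpa using h : (n : ℝ) = 0)⟩
  exact (hx.intCast_mul hd).sub_intCast n |>.ne_zero h

lemma Irrational.den_mul_sub_num_ne_zero {x : ℝ} (hx : Irrational x) (r : ℚ) :
    (r.den : ℝ) * x - r.num ≠ 0 := fun h =>
  r.den_ne_zero (by exact_mod_cast (hx.eq_zero_of_mul_sub_eq_zero (d := r.den) (by simpa)).1)

lemma Irrational.eq_of_den_mul_sub_num_eq {x : ℝ} (hx : Irrational x) {r s : ℚ}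
    (h : (s.den : ℝ) * x - s.num = (r.den : ℝ) * x - r.num) : s = r := by
  obtain ⟨hden, hnum⟩ := hx.eq_zero_of_mul_sub_eq_zero (d := s.den - r.den) (n := s.num - r.num)
    (by push_cast; linarith)
  exact Rat.ext (by linarith) (by omega)

lemma Irrational.den_mul_sub_num_add_ne_zero {x : ℝ} (hx : Irrational x) (r s : ℚ) :
    ((s.den : ℝ) * x - s.num) + ((r.den : ℝ) * x - r.num) ≠ 0 := fun h => by
  have := (hx.eq_zero_of_mul_sub_eq_zero (d := s.den + r.den) (n := s.num + r.num)
    (by push_cast; linarith)).1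
  have := s.pos
  omega

lemma Real.sign_mul_of_pos {c y : ℝ} (hc : 0 < c) : Real.sign (c * y) = Real.sign y := by
  rcases lt_trichotomy y 0 with hy | rfl | hy
  · rw [Real.sign_of_neg hy, Real.sign_of_neg (mul_neg_of_pos_of_neg hc hy)]
  · rw [mul_zero]
  · rw [Real.sign_of_pos hy, Real.sign_of_pos (mul_pos hc hy)]

lemma Real.sign_eq_sign_iff {u v : ℝ} :
    Real.sign u = Real.sign v ↔ (u < 0 ∧ v < 0) ∨ (u = 0 ∧ v = 0) ∨ (0 < u ∧ 0 < v) := by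
  rcases lt_trichotomy u 0 with hu | rfl | hu <;> rcases lt_trichotomy v 0 with hv | rfl | hv <;>
    simp only [Real.sign_of_neg, Real.sign_of_pos, Real.sign_zero, *] <;>
    grind

lemma abs_sub_two_mul_lt_abs {u v : ℝ} (hsign : Real.sign u = Real.sign v) (hne : u ≠ v)
    (hle : |u| ≤ |v|) : |v - 2 * u| < |v| := by
  rw [Real.sign_eq_sign_iff] at hsign
  rcases hsign with ⟨hu, hv⟩ | ⟨rfl, rfl⟩ | ⟨hu, hv⟩
  · rw [abs_of_neg hu, abs_of_neg hv] at hle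
    rw [abs_of_neg hv, abs_lt]
    constructor <;> cases lt_or_gt_of_ne hne <;> linarith
  · exact absurd rfl hne
  · rw [abs_of_pos hu, abs_of_pos hv] at hle
    rw [abs_of_pos hv, abs_lt]
    constructor <;> cases lt_or_gt_of_ne hne <;> linarith

lemma sign_sub_eq_and_abs_sub_eq {u v : ℝ} (hsign : Real.sign u ≠ Real.sign v) (hv : v ≠ 0) :
    Real.sign (v - u) = Real.sign v ∧ |v - u| = |u| + |v| := by
  rw [Ne, Real.sign_eq_sign_iff] at hsign
  rcases lt_or_gt_of_ne hv with hv | hv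
  · have hu : 0 ≤ u := by by_contra! hu; exact hsign (Or.inl ⟨hu, hv⟩)
    rw [Real.sign_of_neg hv, Real.sign_of_neg (by linarith), abs_of_neg hv, abs_of_nonneg hu,
      abs_of_neg (by linarith)]
    constructor <;> ring
  · have hu : u ≤ 0 := by by_contra! hu; exact hsign (Or.inr (Or.inr ⟨hu, hv⟩))
    rw [Real.sign_of_pos hv, Real.sign_of_pos (by linarith), abs_of_pos hv, abs_of_nonpos hu,
      abs_of_pos (by linarith)]
    constructor <;> ring

lemma Rat.exists_eq_mul_num_eq_mul_den (n : ℤ) {d : ℤ} (hd : 0 < d) :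
    ∃ t : ℚ, ∃ g : ℤ, 0 < g ∧ n = g * t.num ∧ d = g * t.den := by
  obtain ⟨g, hn, hdg⟩ := Rat.exists_eq_mul_div_num_and_eq_mul_div_den n hd.ne'
  refine ⟨n / d, g, ?_, hn, hdg⟩
  have := ((n : ℚ) / d).pos
  nlinarith

lemma mul_den_mul_sub_mul_num (x : ℝ) (g : ℤ) (t : ℚ) :
    ((g * t.den : ℤ) : ℝ) * x - (g * t.num : ℤ) = g * ((t.den : ℝ) * x - t.num) := by
  push_cast; ring

lemma den_mul_sub_num_add (x : ℝ) (r : ℚ) (k : ℤ) :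
    ((r.den : ℤ) : ℝ) * x - ((r.num + k : ℤ) : ℝ) = ((r.den : ℝ) * x - r.num) - k := by
  push_cast; ring

lemma abs_den_mul_sub_num_le_of_forall {x : ℝ} {r : ℚ} (P : ℚ → Prop)
    (h : ∀ s, P s → s.den ≤ r.den → s ≠ r →
      |(r.den : ℝ) * x - r.num| < |(s.den : ℝ) * x - s.num|)
    {t : ℚ} (ht : P t) {g : ℤ} (hg : 0 < g) (hgr : g * t.den ≤ r.den) :
    |(r.den : ℝ) * x - r.num| ≤ |((g * t.den : ℤ) : ℝ) * x - (g * t.num : ℤ)| := by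
  have htr : t.den ≤ r.den := by
    have : (t.den : ℤ) ≤ g * t.den := le_mul_of_one_le_left (by positivity) hg
    exact_mod_cast this.trans hgr
  have hterr : |(t.den : ℝ) * x - t.num| ≤ |((g * t.den : ℤ) : ℝ) * x - (g * t.num : ℤ)| := by
    rw [mul_den_mul_sub_mul_num, abs_mul, abs_of_pos (a := (g : ℝ)) (by exact_mod_cast hg)]
    exact le_mul_of_one_le_left (abs_nonneg _) (by exact_mod_cast hg)
  rcases eq_or_ne t r with rfl | hne
  · exact hterr
  · exact (h t ht htr hne).le.trans hterr

lemma IsBestClassApprox.abs_le_abs {α : Fin 3} {x : ℝ} {r : ℚ} (h : IsBestClassApprox α x r)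
    {n d : ℤ} (hd : 0 < d) (hdr : d ≤ r.den) (hn : Even (n - r.num))
    (hdpar : Even (d - r.den)) : |(r.den : ℝ) * x - r.num| ≤ |(d : ℝ) * x - n| := by
  obtain ⟨t, g, hg, rfl, rfl⟩ := Rat.exists_eq_mul_num_eq_mul_den n hd
  have hg_odd : Odd g := by
    have := r.not_even_num_and_even_den
    simp only [Int.even_sub, Int.even_mul, ← Int.not_even_iff_odd] at hn hdpar this ⊢
    tauto
  have ht : QParity α t := by
    refine h.1.of_even_sub ?_ ?_ <;>
      simp only [Int.even_sub, Int.even_mul, ← Int.not_even_iff_odd] at hn hdpar hg_odd ⊢ <;>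
      tauto
  exact abs_den_mul_sub_num_le_of_forall _ h.2 ht hg hdr

lemma IsBestSignedApprox.abs_le_abs {x : ℝ} {r : ℚ} (h : IsBestSignedApprox x r)
    {n d : ℤ} (hd : 0 < d) (hdr : d ≤ r.den)
    (hsign : Real.sign ((d : ℝ) * x - n) = Real.sign ((r.den : ℝ) * x - r.num)) :
    |(r.den : ℝ) * x - r.num| ≤ |(d : ℝ) * x - n| := by
  obtain ⟨t, g, hg, rfl, rfl⟩ := Rat.exists_eq_mul_num_eq_mul_den n hd
  rw [mul_den_mul_sub_mul_num, Real.sign_mul_of_pos (by exact_mod_cast hg)] at hsign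
  exact abs_den_mul_sub_num_le_of_forall _ (fun s hs hsr hne => h s hsr hne hs) hsign hg hdr

lemma IsBestClassApprox.abs_le_one {α : Fin 3} {x : ℝ} {r : ℚ} (h : IsBestClassApprox α x r) :
    |(r.den : ℝ) * x - r.num| ≤ 1 := by
  have hden : (0 : ℤ) < r.den := by exact_mod_cast r.pos
  have hup := h.abs_le_abs (n := r.num + 2) hden le_rfl (by simp) (by simp)
  have hdown := h.abs_le_abs (n := r.num + -2) hden le_rfl (by simp) (by simp)
  rw [den_mul_sub_num_add, ← sq_le_sq] at hup hdown
  push_cast at hup hdown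
  rw [abs_le]
  constructor <;> nlinarith

lemma IsBestSignedApprox.abs_le_one {x : ℝ} {r : ℚ} (h : IsBestSignedApprox x r) :
    |(r.den : ℝ) * x - r.num| ≤ 1 := by
  have hden : (0 : ℤ) < r.den := by exact_mod_cast r.pos
  set e := (r.den : ℝ) * x - r.num
  rw [abs_le]
  constructor
  · by_contra! hlt
    have hneg : e - (-1 : ℤ) < 0 := by push_cast; linarith
    have := h.abs_le_abs (n := r.num + -1) hden le_rfl (by
      rw [den_mul_sub_num_add, Real.sign_of_neg hneg, Real.sign_of_neg (by linarith)])
    rw [den_mul_sub_num_add, abs_of_neg hneg, abs_of_neg (by linarith)] at this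
    push_cast at this
    linarith
  · by_contra! hgt
    have hpos : 0 < e - (1 : ℤ) := by push_cast; linarith
    have := h.abs_le_abs (n := r.num + 1) hden le_rfl (by
      rw [den_mul_sub_num_add, Real.sign_of_pos hpos, Real.sign_of_pos (by linarith)])
    rw [den_mul_sub_num_add, abs_of_pos hpos, abs_of_pos (by linarith)] at this
    push_cast at this
    linarith

theorem IsBestClassApprox.isBestSignedApprox {α : Fin 3} {x : ℝ} (hx : Irrational x) {r : ℚ}
    (h : IsBestClassApprox α x r) : IsBestSignedApprox x r := by
  intro s hsr hne hsign
  set er := (r.den : ℝ) * x - r.num with her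
  set es := (s.den : ℝ) * x - s.num with hes
  by_contra! hle
  have hlt : |er - 2 * es| < |er| :=
    abs_sub_two_mul_lt_abs hsign (fun heq => hne (hx.eq_of_den_mul_sub_num_eq heq)) hle
  have hsr' : (s.den : ℤ) ≤ r.den := by exact_mod_cast hsr
  rcases lt_trichotomy (2 * s.den : ℤ) r.den with hq | hq | hq
  · have := h.abs_le_abs (n := r.num - 2 * s.num) (d := r.den - 2 * s.den) (by omega)
      (by have := s.pos; omega) ⟨-s.num, by ring⟩ ⟨-s.den, by ring⟩
    have herr : ((r.den - 2 * s.den : ℤ) : ℝ) * x - (r.num - 2 * s.num : ℤ) = er - 2 * es := by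
      push_cast; ring
    rw [herr, ← her] at this
    linarith
  · have herr : er - 2 * es = ((2 * s.num - r.num : ℤ) : ℝ) := by
      rw [her, hes, ← Int.cast_natCast r.den, ← hq]; push_cast; ring
    have hint : |2 * s.num - r.num| < 1 := by
      have := hlt.trans_le h.abs_le_one
      rw [herr, ← Int.cast_abs] at this
      exact_mod_cast this
    exact r.not_even_num_and_even_den ⟨⟨s.num, by rw [abs_lt] at hint; omega⟩, ⟨s.den, by omega⟩⟩
  · have := h.abs_le_abs (n := 2 * s.num - r.num) (d := 2 * s.den - r.den) (by omega) (by omega)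
      ⟨s.num - r.num, by ring⟩ ⟨s.den - r.den, by ring⟩
    have herr : ((2 * s.den - r.den : ℤ) : ℝ) * x - (2 * s.num - r.num : ℤ) = -(er - 2 * es) := by
      push_cast; ring
    rw [herr, abs_neg, ← her] at this
    linarith

theorem IsBestSignedApprox.isBestClassApprox {α : Fin 3} {x : ℝ} (hx : Irrational x) {r : ℚ}
    (h : IsBestSignedApprox x r) (hr : QParity α r) : IsBestClassApprox α x r := by
  refine ⟨hr, fun s hs hsr hne => ?_⟩
  set er := (r.den : ℝ) * x - r.num with her
  set es := (s.den : ℝ) * x - s.num with hes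
  by_cases hsign : Real.sign es = Real.sign er
  · exact h s hsr hne hsign
  by_contra! hle
  obtain ⟨hsub_sign, hsub_abs⟩ := sign_sub_eq_and_abs_sub_eq hsign (hx.den_mul_sub_num_ne_zero r)
  obtain ⟨⟨m, hm⟩, ⟨k, hk⟩⟩ := hs.even_sub hr
  have hge : |er| ≤ |es| := by
    rcases hsr.lt_or_eq with hlt | heq
    · have herr : ((-k : ℤ) : ℝ) * x - (-m : ℤ) = (2 : ℝ)⁻¹ * (er - es) := by
        have hk' : (s.den : ℤ) = r.den + 2 * k := by omega
        rw [her, hes, show s.num = r.num + 2 * m by omega, ← Int.cast_natCast s.den, hk']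
        push_cast; ring
      have := h.abs_le_abs (n := -m) (d := -k) (by omega) (by omega)
        (by rw [herr, Real.sign_mul_of_pos (by norm_num), hsub_sign])
      rw [herr, abs_mul, hsub_abs, ← her] at this
      norm_num at this
      linarith
    · have hm0 : m ≠ 0 := fun hm0 => hne (Rat.ext (by omega) heq)
      have herr : er - es = ((2 * m : ℤ) : ℝ) := by
        rw [her, hes, heq, show s.num = r.num + 2 * m by omega]; push_cast; ring
      have h2 : (2 : ℝ) ≤ |((2 * m : ℤ) : ℝ)| := by
        rw [← Int.cast_abs]; exact_mod_cast (by rw [le_abs']; omega : (2 : ℤ) ≤ |2 * m|)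
      rw [← herr, hsub_abs] at h2
      linarith [h.abs_le_one]
  have hopp : es = -er := by
    rcases abs_eq_abs.1 (le_antisymm hle hge) with heq | heq
    · exact absurd (congrArg Real.sign heq) hsign
    · exact heq
  exact hx.den_mul_sub_num_add_ne_zero r s (by rw [← hes, ← her, hopp]; ring)

/-- Theorem 1 (i): `B^(α)(x) = S(x) ∩ Q^(α)`. -/
theorem bestClassApprox_eq_bestSigned_inter_parity (x : ℝ) (hx : Irrational x) (α : Fin 3) :
    {r : ℚ | IsBestClassApprox α x r} =
      {r : ℚ | IsBestSignedApprox x r} ∩ {r : ℚ | QParity α r} := by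
  ext r
  exact ⟨fun h => ⟨h.isBestSignedApprox hx, h.1⟩, fun ⟨h, hr⟩ => h.isBestClassApprox hx hr⟩
end

section
/- For any irrational x, the set of best signed approximations of x is the disjoint union of the sets of best (0)-, (1)-, and (∞)-rational approximations: S(x) = B^(0)(x) ⊔ B^(1)(x) ⊔ B^(∞)(x). -/
/-!
Write `θ(n, d) = d x - n`. An integer pair `(n, d)` with `d ≠ 0` is `g` times a reduced fraction,
whose error is `|θ(n, d)| / |g| ≤ |θ(n, d)|`. If `r` is a best signed approximation and `s ≠ r` lies
in the class of `r`, on the other side of `x`, with `|θ(s)| ≤ |θ(r)|`, then `(r - s) / 2` is an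
integer pair on the side of `r`, of smaller denominator, with error `|θ(r) - θ(s)| / 2 ≤ |θ(r)|`,
which `r` must strictly beat. Conversely, if `r` is best in its class and `s` lies on the side of
`r` with `|θ(s)| < |θ(r)|`, the reflection `2 s - r` lies in the class of `r` (it reduces by an odd
factor, which keeps the class) and its error `|2 θ(s) - θ(r)|` is below `|θ(r)|`. A pair of
denominator `0` has error at least `1` and is beaten by an integer, resp. a half-integer,
approximation. The classes partition the fractions since numerator and denominator are never both
even.
-/

lemma Real.sign_eq_sign_iff_mul_pos {a b : ℝ} (ha : a ≠ 0) (hb : b ≠ 0) :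
    Real.sign a = Real.sign b ↔ 0 < a * b := by
  rcases ha.lt_or_gt with ha | ha <;> rcases hb.lt_or_gt with hb | hb
  · simp [Real.sign_of_neg ha, Real.sign_of_neg hb, mul_pos_of_neg_of_neg ha hb]
  · simp [Real.sign_of_neg ha, Real.sign_of_pos hb, (mul_neg_of_neg_of_pos ha hb).le.not_gt]
    norm_num
  · simp [Real.sign_of_pos ha, Real.sign_of_neg hb, (mul_neg_of_pos_of_neg ha hb).le.not_gt]
    norm_num
  · simp [Real.sign_of_pos ha, Real.sign_of_pos hb, mul_pos ha hb]

lemma abs_two_mul_sub_lt {a b : ℝ} (hab : 0 < b * a) (hle : |b| ≤ |a|) (hne : b ≠ a) :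
    |2 * b - a| < |a| := by
  have ha : a ≠ 0 := by rintro rfl; simp at hab
  rcases ha.lt_or_gt with ha | ha
  · have hb : b < 0 := by nlinarith
    rw [abs_of_neg ha, abs_of_neg hb] at hle
    have : a < b := lt_of_le_of_ne (by linarith) hne.symm
    rw [abs_of_neg ha, abs_lt]; constructor <;> linarith
  · have hb : 0 < b := by nlinarith
    rw [abs_of_pos ha, abs_of_pos hb] at hle
    have : b < a := lt_of_le_of_ne hle hne
    rw [abs_of_pos ha, abs_lt]; constructor <;> linarith

namespace BestApprox

def err (x : ℝ) (n d : ℤ) : ℝ := d * x - n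

variable {x : ℝ}

lemma err_rat (r : ℚ) : err x r.num r.den = r.den * x - r.num := by
  simp [err]

lemma err_mul (g n d : ℤ) : err x (g * n) (g * d) = g * err x n d := by
  simp only [err]; push_cast; ring

lemma err_ne_zero (hx : Irrational x) (n : ℤ) {d : ℤ} (hd : d ≠ 0) : err x n d ≠ 0 :=
  ((hx.intCast_mul hd).sub_intCast n).ne_zero

lemma err_rat_ne_zero (hx : Irrational x) (r : ℚ) : err x r.num r.den ≠ 0 :=
  err_ne_zero hx _ (by exact_mod_cast r.den_nz)

lemma err_rat_injective (hx : Irrational x) :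
    Function.Injective fun r : ℚ => err x r.num r.den := by
  intro r s h
  have hsub : err x (r.num - s.num) (r.den - s.den) = 0 := by
    simp only [err] at h ⊢; push_cast at h ⊢; linarith
  have hden : r.den = s.den := by
    by_contra hne
    exact err_ne_zero hx _ (sub_ne_zero.mpr (by exact_mod_cast hne)) hsub
  refine Rat.ext ?_ hden
  simp only [err, hden, sub_self, Int.cast_zero, zero_mul, zero_sub, neg_eq_zero] at hsub
  exact sub_eq_zero.mp (by exact_mod_cast hsub)

lemma exists_eq_mul_num_den {n d : ℤ} (hd : d ≠ 0) :
    ∃ (q : ℚ) (g : ℤ), n = g * q.num ∧ d = g * q.den := by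
  have hq : Rat.divInt n d * d = n := by
    rw [Rat.divInt_eq_div]; field_simp
  obtain ⟨g, hg⟩ := Rat.den_dvd n d
  generalize Rat.divInt n d = q at hq hg
  refine ⟨q, g, ?_, by rw [hg, mul_comm]⟩
  have : ((g * q.num : ℤ) : ℚ) = n := by
    rw [← hq, hg]; push_cast; rw [← Rat.mul_den_eq_num]; ring
  exact_mod_cast this.symm

def parity (n d : ℤ) : ZMod 2 × ZMod 2 := (n, d)

def classCode : Fin 3 → ZMod 2 × ZMod 2 := ![(0, 1), (1, 1), (1, 0)]

lemma qParity_iff (α : Fin 3) (r : ℚ) : QParity α r ↔ parity r.num r.den = classCode α := by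
  fin_cases α <;>
    simp [QParity, parity, classCode, Prod.ext_iff, ZMod.intCast_eq_zero_iff_even,
      ZMod.intCast_eq_one_iff_odd, ZMod.natCast_eq_zero_iff_even, ZMod.natCast_eq_one_iff_odd]

lemma parity_eq_zero_iff {n d : ℤ} : parity n d = 0 ↔ 2 ∣ n ∧ 2 ∣ d := by
  simp only [parity, Prod.mk_eq_zero, ZMod.intCast_zmod_eq_zero_iff_dvd, Nat.cast_ofNat]

lemma parity_sub (n d n' d' : ℤ) : parity (n - n') (d - d') = parity n d - parity n' d' := by
  simp [parity]

lemma parity_ne_zero (r : ℚ) : parity r.num r.den ≠ 0 := by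
  intro h
  rw [parity_eq_zero_iff] at h
  have h2 : 2 ∣ Nat.gcd r.num.natAbs r.den := Nat.dvd_gcd (by omega) (by omega)
  rw [r.reduced] at h2
  omega

lemma parity_mul (g n d : ℤ) : parity (g * n) (g * d) = (g : ZMod 2) • parity n d := by
  simp [parity]

lemma exists_qParity (r : ℚ) : ∃ α, QParity α r := by
  have key : ∀ v : ZMod 2 × ZMod 2, v ≠ 0 → ∃ α, v = classCode α := by decide
  simpa only [qParity_iff] using key _ (parity_ne_zero r)

lemma qParity_unique {α β : Fin 3} {r : ℚ} (hα : QParity α r) (hβ : QParity β r) : α = β := by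
  have key : Function.Injective classCode := by decide
  rw [qParity_iff] at hα hβ
  exact key (hα.symm.trans hβ)

lemma parity_eq_of_mul {α : Fin 3} {g n d : ℤ} (h : parity (g * n) (g * d) = classCode α) :
    parity n d = classCode α := by
  have key : ∀ (c : ZMod 2) (v : ZMod 2 × ZMod 2), c • v = classCode α → v = classCode α := by
    fin_cases α <;> decide
  rw [parity_mul] at h
  exact key _ _ h

def IsBestAmong (P : ℚ → Prop) (x : ℝ) (r : ℚ) : Prop :=
  ∀ s : ℚ, P s → s.den ≤ r.den → s ≠ r → |err x r.num r.den| < |err x s.num s.den|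

lemma isBestSignedApprox_iff (hx : Irrational x) (r : ℚ) :
    IsBestSignedApprox x r ↔
      IsBestAmong (fun s => 0 < err x s.num s.den * err x r.num r.den) x r := by
  have hne (s : ℚ) : (s.den : ℝ) * x - s.num ≠ 0 := err_rat (x := x) s ▸ err_rat_ne_zero hx s
  simp only [IsBestSignedApprox, IsBestAmong, err_rat]
  refine forall_congr' fun s => ?_
  rw [Real.sign_eq_sign_iff_mul_pos (hne s) (hne r)]
  tauto

lemma isBestClassApprox_iff (α : Fin 3) (r : ℚ) :
    IsBestClassApprox α x r ↔ QParity α r ∧ IsBestAmong (QParity α) x r := by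
  simp only [IsBestClassApprox, IsBestAmong, err_rat]

section IsBestAmong

variable {P : ℚ → Prop} {r : ℚ}

lemma IsBestAmong.abs_err_le (h : IsBestAmong P x r) {s : ℚ} (hs : P s) (hden : s.den ≤ r.den) :
    |err x r.num r.den| ≤ |err x s.num s.den| := by
  rcases eq_or_ne s r with rfl | hne
  · exact le_rfl
  · exact (h s hs hden hne).le

lemma abs_err_le_abs_err_mul (q : ℚ) {g : ℤ} (hg : g ≠ 0) :
    |err x q.num q.den| ≤ |err x (g * q.num) (g * q.den)| := by
  rw [err_mul, abs_mul]
  exact le_mul_of_one_le_left (abs_nonneg _) (by exact_mod_cast Int.one_le_abs hg)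

lemma den_le_abs_mul_den (q : ℚ) {g : ℤ} (hg : g ≠ 0) : (q.den : ℤ) ≤ |g * q.den| := by
  rw [abs_mul, Nat.abs_cast]
  exact le_mul_of_one_le_left (by positivity) (Int.one_le_abs hg)

lemma IsBestAmong.abs_err_le_pair (h : IsBestAmong P x r) {n d : ℤ} (hd : d ≠ 0)
    (hdr : |d| ≤ r.den) (hP : ∀ (q : ℚ) (g : ℤ), n = g * q.num → d = g * q.den → P q) :
    |err x r.num r.den| ≤ |err x n d| := by
  obtain ⟨q, g, rfl, rfl⟩ := exists_eq_mul_num_den (n := n) hd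
  have hg := left_ne_zero_of_mul hd
  have := den_le_abs_mul_den q hg
  exact (h.abs_err_le (hP q g rfl rfl) (by omega)).trans (abs_err_le_abs_err_mul q hg)

lemma IsBestAmong.abs_err_lt_pair (h : IsBestAmong P x r) {n d : ℤ} (hd : d ≠ 0)
    (hdr : |d| < r.den) (hP : ∀ (q : ℚ) (g : ℤ), n = g * q.num → d = g * q.den → P q) :
    |err x r.num r.den| < |err x n d| := by
  obtain ⟨q, g, rfl, rfl⟩ := exists_eq_mul_num_den (n := n) hd
  have hg := left_ne_zero_of_mul hd
  have := den_le_abs_mul_den q hg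
  exact (h q (hP q g rfl rfl) (by omega) (by rintro rfl; omega)).trans_le
    (abs_err_le_abs_err_mul q hg)

end IsBestAmong

lemma exists_int_abs_sub_lt (hx : Irrational x) {a : ℝ} (ha : a ≠ 0) :
    ∃ m : ℤ, 0 < (x - m) * a ∧ |x - m| < 1 := by
  rcases ha.lt_or_gt with ha | ha
  · have h1 : x < ⌈x⌉ := (Int.le_ceil x).lt_of_ne (hx.ne_int _)
    have h2 := Int.ceil_lt_add_one x
    exact ⟨⌈x⌉, by nlinarith, by rw [abs_lt]; constructor <;> linarith⟩
  · have h1 : 0 < x - ⌊x⌋ := by rw [Int.self_sub_floor, Int.fract_pos]; exact hx.ne_int _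
    have h2 : x - ⌊x⌋ < 1 := by rw [Int.self_sub_floor]; exact Int.fract_lt_one x
    exact ⟨⌊x⌋, by positivity, by rw [abs_lt]; constructor <;> linarith⟩

lemma exists_qParity_two_abs_err_lt (hx : Irrational x) :
    ∃ t : ℚ, QParity 2 t ∧ t.den = 2 ∧ |err x t.num t.den| < 1 := by
  have hodd : Odd (2 * ⌊x⌋ + 1) := odd_two_mul_add_one _
  let t : ℚ := ⟨2 * ⌊x⌋ + 1, 2, by norm_num, Nat.coprime_two_right.mpr (Int.natAbs_odd.mpr hodd)⟩
  have h1 : 0 < Int.fract x := Int.fract_pos.mpr (hx.ne_int _)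
  have h2 := Int.fract_lt_one x
  have herr : err x t.num t.den = 2 * Int.fract x - 1 := by
    simp only [err, t, Int.fract]; push_cast; ring
  refine ⟨t, ⟨hodd, ?_⟩, rfl, ?_⟩
  · exact even_two
  · rw [herr, abs_lt]; constructor <;> linarith

end BestApprox

namespace IsBestSignedApprox

open BestApprox

variable {x : ℝ} {r : ℚ}

lemma abs_err_lt_pair (hx : Irrational x) (h : IsBestSignedApprox x r)
    {n d : ℤ} (hd : 0 ≤ d) (hdr : d < r.den) (hsign : 0 < err x n d * err x r.num r.den) :
    |err x r.num r.den| < |err x n d| := by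
  rw [isBestSignedApprox_iff hx] at h
  rcases hd.eq_or_lt with rfl | hd
  · have hn : n ≠ 0 := by rintro rfl; simp [err] at hsign
    obtain ⟨m, hm, hm1⟩ := exists_int_abs_sub_lt hx (err_rat_ne_zero hx r)
    have hm_err : err x (m : ℚ).num (m : ℚ).den = x - m := by simp [err]
    calc |err x r.num r.den| ≤ |err x (m : ℚ).num (m : ℚ).den| :=
          h.abs_err_le (by rwa [hm_err]) (by simp only [Rat.den_intCast]; exact r.den_pos)
      _ < 1 := by rwa [hm_err]
      _ ≤ |err x n 0| := by
          rw [show err x n 0 = -n by simp [err], abs_neg, ← Int.cast_abs]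
          exact_mod_cast Int.one_le_abs hn
  · refine h.abs_err_lt_pair hd.ne' (by rwa [abs_of_pos hd]) fun q g hn hdq => ?_
    subst hn hdq
    have hg : 0 < g := pos_of_mul_pos_left hd (by positivity)
    rw [err_mul, mul_assoc] at hsign
    exact (mul_pos_iff_of_pos_left (by exact_mod_cast hg)).mp hsign

theorem isBestClassApprox_s7 (hx : Irrational x) (h : IsBestSignedApprox x r)
    {α : Fin 3} (hα : QParity α r) : IsBestClassApprox α x r := by
  refine (isBestClassApprox_iff α r).mpr ⟨hα, fun s hs hden hne => ?_⟩
  set a := err x r.num r.den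
  set b := err x s.num s.den
  by_cases hsign : 0 < b * a
  · exact (isBestSignedApprox_iff hx r).mp h s hsign hden hne
  by_contra! hle
  -- `r` and `s` lie in the same class, so `(r - s) / 2` is an integer pair
  have hpar : parity (r.num - s.num) (r.den - s.den) = 0 := by
    rw [parity_sub, (qParity_iff α r).mp hα, (qParity_iff α s).mp hs, sub_self]
  obtain ⟨⟨n, hn⟩, ⟨d, hd⟩⟩ := parity_eq_zero_iff.mp hpar
  have herr : err x n d = (a - b) / 2 := by
    have hn' : (r.num : ℝ) - s.num = 2 * n := by exact_mod_cast hn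
    have hd' : (r.den : ℝ) - s.den = 2 * d := by exact_mod_cast hd
    simp only [err, a, b, Int.cast_natCast]
    linear_combination (-x * hd' + hn') / 2
  have ha := err_rat_ne_zero hx r
  have hs0 := s.den_pos
  have hlt := abs_err_lt_pair hx h (n := n) (d := d) (by omega) (by omega)
    (by rw [herr]; nlinarith [mul_self_pos.mpr ha])
  rw [herr, abs_div, abs_two] at hlt
  linarith [abs_sub a b]

end IsBestSignedApprox

namespace IsBestClassApprox

open BestApprox

variable {x : ℝ} {r : ℚ}

lemma abs_err_le_pair (hx : Irrational x) {α : Fin 3}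
    (h : IsBestClassApprox α x r) {n d : ℤ} (hpar : parity n d = classCode α)
    (hdr : |d| ≤ r.den) : |err x r.num r.den| ≤ |err x n d| := by
  obtain ⟨hr, h⟩ := (isBestClassApprox_iff α r).mp h
  rcases eq_or_ne d 0 with rfl | hd
  · -- only the class `∞` contains pairs `(n, 0)`, and then `n` is odd
    have key : ∀ (α : Fin 3) (a : ZMod 2), (a, 0) = classCode α → α = 2 ∧ a = 1 := by decide
    obtain ⟨rfl, hodd⟩ := key α n (by simpa [parity] using hpar)
    have hn : n ≠ 0 := by rintro rfl; simp at hodd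
    have hrden : 2 ≤ r.den := by
      obtain ⟨k, hk⟩ := hr.2
      have := r.den_pos
      omega
    obtain ⟨t, ht, htden, htlt⟩ := exists_qParity_two_abs_err_lt hx
    refine le_of_lt ?_
    calc |err x r.num r.den| ≤ |err x t.num t.den| := h.abs_err_le ht (by omega)
      _ < 1 := htlt
      _ ≤ |err x n 0| := by
          rw [show err x n 0 = -n by simp [err], abs_neg, ← Int.cast_abs]
          exact_mod_cast Int.one_le_abs hn
  · refine h.abs_err_le_pair hd hdr fun q g hn hdq => ?_
    subst hn hdq
    exact (qParity_iff α q).mpr (parity_eq_of_mul hpar)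

theorem isBestSignedApprox_s7 (hx : Irrational x) {α : Fin 3}
    (h : IsBestClassApprox α x r) : IsBestSignedApprox x r := by
  refine (isBestSignedApprox_iff hx r).mpr fun s hsign hden hne => ?_
  set a := err x r.num r.den
  set b := err x s.num s.den
  by_contra! hle
  have hba : b ≠ a := fun e => hne (err_rat_injective hx e)
  -- the reflection `2 s - r` of `r` through `s` stays in the class of `r`
  have hpar : parity (2 * s.num - r.num) (2 * s.den - r.den) = classCode α := by
    rw [← (qParity_iff α r).mp h.1]
    have h2 : (2 : ZMod 2) = 0 := rfl
    simp only [parity, Int.cast_sub, Int.cast_mul, Int.cast_ofNat, h2, zero_mul, zero_sub,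
      ZMod.neg_eq_self_mod_two]
  have herr : err x (2 * s.num - r.num) (2 * s.den - r.den) = 2 * b - a := by
    simp only [err, a, b]; push_cast; ring
  have hle' := abs_err_le_pair hx h hpar (by have := s.den_pos; rw [abs_le]; constructor <;> omega)
  rw [herr] at hle'
  exact (abs_two_mul_sub_lt hsign hle hba).not_ge hle'

end IsBestClassApprox

/-- `S(x) = B^(0)(x) ⊔ B^(1)(x) ⊔ B^(∞)(x)` (disjoint union). -/
theorem bestSigned_eq_disjoint_union_bestClass (x : ℝ) (hx : Irrational x) :
    ({r : ℚ | IsBestSignedApprox x r} =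
      {r : ℚ | IsBestClassApprox 0 x r} ∪ {r : ℚ | IsBestClassApprox 1 x r} ∪
        {r : ℚ | IsBestClassApprox 2 x r}) ∧
    (∀ α β : Fin 3, α ≠ β →
      {r : ℚ | IsBestClassApprox α x r} ∩ {r : ℚ | IsBestClassApprox β x r} = ∅) := by
  refine ⟨Set.ext fun r => ⟨fun h => ?_, fun h => ?_⟩, fun α β hαβ => ?_⟩
  · obtain ⟨α, hα⟩ := BestApprox.exists_qParity r
    have := h.isBestClassApprox_s7 hx hα
    fin_cases α <;> simp_all
  · rcases h with (h | h) | h <;> exact h.isBestSignedApprox_s7 hx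
  · refine Set.eq_empty_of_forall_notMem fun r ⟨hα, hβ⟩ => hαβ ?_
    exact BestApprox.qParity_unique hα.1 hβ.1
end

section
/- Let x be irrational with regular continued fraction convergents p_n/q_n. If a rational a/b in lowest terms satisfies b < q_n and |bx − a| < |q_{n−2}x − p_{n−2}| for some n ≥ 1, then a/b = p_{n−1}/q_{n−1} or a/b = (k p_{n−1} + p_{n−2})/(k q_{n−1} + q_{n−2}) for some 1 ≤ k < a_n. -/
/-
Since `pₙ₋₂qₙ₋₁ − pₙ₋₁qₙ₋₂ = ±1`, every integer pair is `(a, b) = u (pₙ₋₁, qₙ₋₁) + v (pₙ₋₂, qₙ₋₂)`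
with `u, v ∈ ℤ`, and then `bx − a = u δₙ₋₁ + v δₙ₋₂` for the errors `δⱼ = qⱼx − pⱼ`. These
alternate in sign, so `|bx − a| = |v |δₙ₋₂| − u |δₙ₋₁||`, and `|bx − a| < |δₙ₋₂|` forces `u` and `v`
to have the same sign unless `v = 0`. Then `b > 0` makes both positive, `b < qₙ` gives `u < aₙ`,
and `|δₙ₋₂| = aₙ |δₙ₋₁| + |δₙ|` rules out `v ≥ 2`. If `v = 0`, coprimality gives `u = 1`.
-/

/-- Iterates of the Gauss map procedure producing complete quotients of `x`:
`t₀ = x`, `tₙ₊₁ = 1/(tₙ − ⌊tₙ⌋)`. -/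
noncomputable def gaussIter (x : ℝ) : ℕ → ℝ
  | 0 => x
  | n + 1 => (gaussIter x n - ⌊gaussIter x n⌋)⁻¹

/-- The partial quotients `aₙ = ⌊tₙ⌋` of the regular continued fraction of `x`. -/
noncomputable def cfA (x : ℝ) (n : ℕ) : ℤ := ⌊gaussIter x n⌋

/-- Numerators of the principal convergents, shifted by one:
`cfP x 0 = p₋₁ = 1`, `cfP x (n+1) = pₙ`. -/
noncomputable def cfP (x : ℝ) : ℕ → ℤ
  | 0 => 1
  | 1 => ⌊x⌋
  | n + 2 => cfA x (n + 1) * cfP x (n + 1) + cfP x n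

/-- Denominators of the principal convergents, shifted by one:
`cfQ x 0 = q₋₁ = 0`, `cfQ x (n+1) = qₙ`. -/
noncomputable def cfQ (x : ℝ) : ℕ → ℤ
  | 0 => 0
  | 1 => 1
  | n + 2 => cfA x (n + 1) * cfQ x (n + 1) + cfQ x n

theorem irrational_gaussIter {x : ℝ} (hx : Irrational x) (n : ℕ) :
    Irrational (gaussIter x n) := by
  induction n with
  | zero => exact hx
  | succ n ih => exact (ih.sub_intCast _).inv

theorem fract_gaussIter_pos {x : ℝ} (hx : Irrational x) (n : ℕ) :
    0 < Int.fract (gaussIter x n) :=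
  Int.fract_pos.mpr ((irrational_gaussIter hx n).ne_int _)

theorem gaussIter_succ (x : ℝ) (n : ℕ) : gaussIter x (n + 1) = (Int.fract (gaussIter x n))⁻¹ :=
  rfl

theorem one_lt_gaussIter_succ {x : ℝ} (hx : Irrational x) (n : ℕ) :
    1 < gaussIter x (n + 1) :=
  (one_lt_inv₀ (fract_gaussIter_pos hx n)).mpr (Int.fract_lt_one _)

theorem one_le_cfA_succ {x : ℝ} (hx : Irrational x) (n : ℕ) : 1 ≤ cfA x (n + 1) :=
  Int.le_floor.mpr (by exact_mod_cast (one_lt_gaussIter_succ hx n).le)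

theorem one_le_cfQ_succ {x : ℝ} (hx : Irrational x) (n : ℕ) : 1 ≤ cfQ x (n + 1) := by
  induction n using Nat.twoStepInduction with
  | zero => exact le_rfl
  | one => simpa [cfQ] using one_le_cfA_succ hx 0
  | more n ih₀ ih₁ =>
    show 1 ≤ cfA x (n + 2) * cfQ x (n + 2) + cfQ x (n + 1)
    nlinarith [one_le_cfA_succ hx (n + 1)]

theorem cfQ_nonneg {x : ℝ} (hx : Irrational x) : ∀ n, 0 ≤ cfQ x n
  | 0 => le_rfl
  | n + 1 => zero_le_one.trans (one_le_cfQ_succ hx n)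

theorem cfP_mul_cfQ_succ_sub_cfP_succ_mul_cfQ (x : ℝ) (n : ℕ) :
    cfP x n * cfQ x (n + 1) - cfP x (n + 1) * cfQ x n = (-1) ^ n := by
  induction n with
  | zero => simp [cfP, cfQ]
  | succ n ih =>
    simp only [cfP, cfQ]
    linear_combination (-1 : ℤ) * ih

/-- `cfErr x (j + 1) = qⱼ x − pⱼ = δⱼ`, with the index shift of `cfP` and `cfQ`. -/
noncomputable def cfErr (x : ℝ) (n : ℕ) : ℝ := cfQ x n * x - cfP x n

theorem cfErr_add_two (x : ℝ) (n : ℕ) :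
    cfErr x (n + 2) = cfA x (n + 1) * cfErr x (n + 1) + cfErr x n := by
  simp only [cfErr, cfP, cfQ]
  push_cast
  ring

theorem cfErr_succ_mul_gaussIter_succ {x : ℝ} (hx : Irrational x) (n : ℕ) :
    cfErr x (n + 1) * gaussIter x (n + 1) = -cfErr x n := by
  induction n with
  | zero =>
    have hx1 : cfErr x 1 = Int.fract x := by simp [cfErr, cfP, cfQ, Int.self_sub_floor]
    have h0 : Int.fract x ≠ 0 := (fract_gaussIter_pos hx 0).ne'
    rw [hx1, gaussIter_succ]
    show Int.fract x * (Int.fract x)⁻¹ = -cfErr x 0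
    rw [mul_inv_cancel₀ h0]
    simp [cfErr, cfP, cfQ]
  | succ n ih =>
    have hnext : cfErr x (n + 2) = -cfErr x (n + 1) * Int.fract (gaussIter x (n + 1)) := by
      rw [cfErr_add_two, ← Int.self_sub_floor, cfA]
      linear_combination ih
    rw [hnext, gaussIter_succ x (n + 1), mul_assoc,
      mul_inv_cancel₀ (fract_gaussIter_pos hx _).ne', mul_one]

theorem neg_one_pow_mul_cfErr_pos {x : ℝ} (hx : Irrational x) (n : ℕ) :
    0 < (-1) ^ (n + 1) * cfErr x n := by
  induction n with
  | zero => simp [cfErr, cfP, cfQ]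
  | succ n ih =>
    have ht := one_lt_gaussIter_succ hx n
    have hrel : (-1) ^ (n + 2) * cfErr x (n + 1) * gaussIter x (n + 1)
        = (-1) ^ (n + 1) * cfErr x n := by
      rw [mul_assoc, cfErr_succ_mul_gaussIter_succ hx]
      ring
    exact pos_of_mul_pos_left (hrel ▸ ih) (by linarith)

theorem abs_cfErr {x : ℝ} (hx : Irrational x) (n : ℕ) :
    |cfErr x n| = (-1) ^ (n + 1) * cfErr x n := by
  rw [← abs_of_pos (neg_one_pow_mul_cfErr_pos hx n), abs_mul, abs_neg_one_pow, one_mul]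

theorem abs_cfErr_pos {x : ℝ} (hx : Irrational x) (n : ℕ) : 0 < |cfErr x n| :=
  abs_cfErr hx n ▸ neg_one_pow_mul_cfErr_pos hx n

theorem abs_cfErr_eq_add {x : ℝ} (hx : Irrational x) (n : ℕ) :
    |cfErr x n| = cfA x (n + 1) * |cfErr x (n + 1)| + |cfErr x (n + 2)| := by
  rw [abs_cfErr hx, abs_cfErr hx, abs_cfErr hx, cfErr_add_two]
  ring

theorem abs_mul_cfErr_succ_add_mul_cfErr {x : ℝ} (hx : Irrational x) (n : ℕ) (u v : ℝ) :
    |u * cfErr x (n + 1) + v * cfErr x n| = |(v * |cfErr x n| - u * |cfErr x (n + 1)|)| := by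
  rw [abs_cfErr hx, abs_cfErr hx,
    show v * ((-1) ^ (n + 1) * cfErr x n) - u * ((-1) ^ (n + 1 + 1) * cfErr x (n + 1))
      = (-1) ^ (n + 1) * (u * cfErr x (n + 1) + v * cfErr x n) by ring,
    abs_mul, abs_neg_one_pow, one_mul]

theorem Int.exists_eq_mul_add_mul {P Q P' Q' : ℤ} (hdet : IsUnit (P' * Q - P * Q')) (a b : ℤ) :
    ∃ u v : ℤ, a = u * P + v * P' ∧ b = u * Q + v * Q' := by
  have hsq : (P' * Q - P * Q') * (P' * Q - P * Q') = 1 := by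
    rcases Int.isUnit_iff.mp hdet with h | h <;> rw [h] <;> norm_num
  exact ⟨(P' * Q - P * Q') * (b * P' - a * Q'), (P' * Q - P * Q') * (a * Q - b * P),
    by linear_combination (-a) * hsq, by linear_combination (-b) * hsq⟩

section Coefficients

variable {u v : ℤ} {g h : ℝ}

theorem pos_of_abs_mul_sub_mul_lt (hg : 0 < g) (hv : 0 < v) (hlt : |v * h - u * g| < h) :
    0 < u := by
  by_contra! hu
  have hv1 : (1 : ℝ) ≤ v := by exact_mod_cast hv
  have hu0 : (u : ℝ) ≤ 0 := by exact_mod_cast hu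
  have hh : 0 ≤ h := (abs_nonneg _).trans hlt.le
  nlinarith [le_abs_self ((v : ℝ) * h - u * g)]

theorem neg_of_abs_mul_sub_mul_lt (hg : 0 < g) (hv : v < 0) (hlt : |v * h - u * g| < h) :
    u < 0 := by
  have hlt' : |((-v : ℤ) : ℝ) * h - ((-u : ℤ) : ℝ) * g| < h := by
    rw [← abs_neg]
    convert hlt using 2
    push_cast
    ring
  have := pos_of_abs_mul_sub_mul_lt hg (neg_pos.mpr hv) hlt'
  omega

theorem le_one_of_abs_mul_sub_mul_lt {A : ℤ} {g' : ℝ} (hg : 0 < g) (hg' : 0 < g') (huA : u < A)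
    (hlt : |v * (A * g + g') - u * g| < A * g + g') : v ≤ 1 := by
  by_contra! hv
  have hv2 : (2 : ℝ) ≤ v := by exact_mod_cast hv
  have huA' : (u : ℝ) ≤ A - 1 := by exact_mod_cast Int.le_sub_one_of_lt huA
  have hh : 0 ≤ A * g + g' := (abs_nonneg _).trans hlt.le
  nlinarith [le_abs_self ((v : ℝ) * (A * g + g') - u * g)]

end Coefficients

theorem coeffs_eq_of_abs_mul_sub_mul_lt {A P Q P' Q' u v : ℤ} {g g' : ℝ} (hg : 0 < g)
    (hg' : 0 < g') (hQ : 1 ≤ Q) (hQ' : 0 ≤ Q')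
    (hcop : Int.gcd (u * P + v * P') (u * Q + v * Q') = 1)
    (hpos : 0 < u * Q + v * Q') (hlt_next : u * Q + v * Q' < A * Q + Q')
    (hlt : |v * (A * g + g') - u * g| < A * g + g') :
    (u = 1 ∧ v = 0) ∨ (v = 1 ∧ 1 ≤ u ∧ u < A) := by
  rcases lt_trichotomy v 0 with hv | rfl | hv
  · have hu := neg_of_abs_mul_sub_mul_lt hg hv hlt
    nlinarith
  · simp only [zero_mul, add_zero, Int.gcd_mul_left] at hcop hpos
    have hu := Nat.eq_one_of_mul_eq_one_right hcop
    have hu0 : 0 < u := pos_of_mul_pos_left hpos (by omega)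
    exact Or.inl ⟨by omega, rfl⟩
  · have hu := pos_of_abs_mul_sub_mul_lt hg hv hlt
    have huA : u < A := by nlinarith
    exact Or.inr ⟨le_antisymm (le_one_of_abs_mul_sub_mul_lt hg hg' huA hlt) hv, hu, huA⟩

/-- Lemma 3.2: if `a/b` in lowest terms satisfies `b < qₙ` and
`|bx − a| < |qₙ₋₂x − pₙ₋₂|`, then `a/b = pₙ₋₁/qₙ₋₁` or `a/b` is an intermediate
convergent `(k pₙ₋₁ + pₙ₋₂)/(k qₙ₋₁ + qₙ₋₂)` with `1 ≤ k < aₙ`. -/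
theorem intermediate_convergent_characterization
    (x : ℝ) (hx : Irrational x) (n : ℕ) (hn : 1 ≤ n) (a b : ℤ)
    (hb : 0 < b) (hab : Int.gcd a b = 1)
    (h1 : b < cfQ x (n + 1))
    (h2 : |(b : ℝ) * x - a| < |(cfQ x (n - 1) : ℝ) * x - cfP x (n - 1)|) :
    (a = cfP x n ∧ b = cfQ x n) ∨
      ∃ k : ℤ, 1 ≤ k ∧ k < cfA x n ∧
        a = k * cfP x n + cfP x (n - 1) ∧ b = k * cfQ x n + cfQ x (n - 1) := by
  obtain ⟨m, rfl⟩ : ∃ m, n = m + 1 := ⟨n - 1, by omega⟩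
  simp only [Nat.add_sub_cancel] at h2 ⊢
  have hdet : IsUnit (cfP x m * cfQ x (m + 1) - cfP x (m + 1) * cfQ x m) := by
    rw [cfP_mul_cfQ_succ_sub_cfP_succ_mul_cfQ]
    exact isUnit_neg_one.pow m
  obtain ⟨u, v, rfl, rfl⟩ := Int.exists_eq_mul_add_mul hdet a b
  have herr : ((u * cfQ x (m + 1) + v * cfQ x m : ℤ) : ℝ) * x
      - ((u * cfP x (m + 1) + v * cfP x m : ℤ) : ℝ) = u * cfErr x (m + 1) + v * cfErr x m := by
    simp only [cfErr]
    push_cast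
    ring
  change _ < |cfErr x m| at h2
  rw [herr, abs_mul_cfErr_succ_add_mul_cfErr hx, abs_cfErr_eq_add hx] at h2
  rcases coeffs_eq_of_abs_mul_sub_mul_lt (abs_cfErr_pos hx _) (abs_cfErr_pos hx _)
    (one_le_cfQ_succ hx m) (cfQ_nonneg hx m) hab hb h1 h2 with ⟨rfl, rfl⟩ | ⟨rfl, hk, hkA⟩
  · left
    simp
  · exact Or.inr ⟨u, hk, hkA, by ring, by ring⟩
end

section
/- The Möbius action (with conjugation for determinant −1) of H_0 = [[−1,2],[0,1]], H_1 = [[−1,0],[0,1]], and H_∞ = [[1,0],[2,−1]] on rational numbers preserves the parity class: for each α ∈ {0, 1, ∞} and each H ∈ {H_0, H_1, H_∞}, if p/q ∈ Q^(α) (and H·(p/q) is defined), then H·(p/q) ∈ Q^(α). -/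
open Matrix

theorem IsCoprime.mulVec_of_isUnit_det {R : Type*} [CommRing R] {M : Matrix (Fin 2) (Fin 2) R}
    (hM : IsUnit M.det) {v : Fin 2 → R} (hv : IsCoprime (v 0) (v 1)) :
    IsCoprime ((M *ᵥ v) 0) ((M *ᵥ v) 1) := by
  obtain ⟨u, w, huw⟩ := hv
  obtain ⟨e, he⟩ := hM.exists_left_inv
  rw [det_fin_two] at he
  -- `(u, w) ⬝ det⁻¹ · adj M`, since `adj M · M = det M · 1`
  refine ⟨e * (u * M 1 1 - w * M 1 0), e * (w * M 0 0 - u * M 0 1), ?_⟩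
  simp only [mulVec, dotProduct, Fin.sum_univ_two]
  linear_combination (u * v 0 + w * v 1) * he + huw

theorem Rat.even_num_div_iff_and_even_den_div_iff {p q : ℤ} (hpq : IsCoprime p q) (hq : q ≠ 0) :
    (Even ((p / q : ℚ).num) ↔ Even p) ∧ (Even (((p / q : ℚ).den : ℤ)) ↔ Even q) := by
  obtain ⟨c, hp, hq'⟩ := Rat.exists_eq_mul_div_num_and_eq_mul_div_den p hq
  have hc : ¬Even c := by
    rcases Int.isUnit_iff.mp (hpq.isUnit_of_dvd' ⟨_, hp⟩ ⟨_, hq'⟩) with rfl | rfl <;> decide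
  constructor
  · conv_rhs => rw [hp, Int.even_mul]
    tauto
  · conv_rhs => rw [hq', Int.even_mul]
    tauto

theorem QParity.congr {r s : ℚ} (hnum : Even r.num ↔ Even s.num)
    (hden : Even (r.den : ℤ) ↔ Even (s.den : ℤ)) (α : Fin 3) : QParity α r ↔ QParity α s := by
  fin_cases α <;> simp only [QParity, ← Int.not_even_iff_odd, hnum, hden]

theorem QParity.moebius {M : Matrix (Fin 2) (Fin 2) ℤ} (hdet : IsUnit M.det)
    (h00 : Odd (M 0 0)) (h01 : Even (M 0 1)) (h10 : Even (M 1 0)) (h11 : Odd (M 1 1))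
    {α : Fin 3} {r : ℚ} (hr : QParity α r) (hne : (M 1 0 : ℚ) * r + M 1 1 ≠ 0) :
    QParity α ((M 0 0 * r + M 0 1) / (M 1 0 * r + M 1 1)) := by
  set v := M *ᵥ ![r.num, r.den]
  have hv0 : v 0 = M 0 0 * r.num + M 0 1 * r.den := by simp [v]
  have hv1 : v 1 = M 1 0 * r.num + M 1 1 * r.den := by simp [v]
  have hv0_cast : (v 0 : ℚ) = (M 0 0 * r + M 0 1) * r.den := by
    rw [hv0]; push_cast; rw [← Rat.mul_den_eq_num]; ring
  have hv1_cast : (v 1 : ℚ) = (M 1 0 * r + M 1 1) * r.den := by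
    rw [hv1]; push_cast; rw [← Rat.mul_den_eq_num]; ring
  have hden : (r.den : ℚ) ≠ 0 := by exact_mod_cast r.den_nz
  have hv1_ne : v 1 ≠ 0 := by
    have : (v 1 : ℚ) ≠ 0 := by rw [hv1_cast]; exact mul_ne_zero hne hden
    exact_mod_cast this
  have hcop : IsCoprime (v 0) (v 1) :=
    IsCoprime.mulVec_of_isUnit_det hdet (by simpa using r.isCoprime_num_den)
  obtain ⟨hnum_v, hden_v⟩ := Rat.even_num_div_iff_and_even_den_div_iff hcop hv1_ne
  rw [← mul_div_mul_right _ _ hden, ← hv0_cast, ← hv1_cast]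
  refine (QParity.congr ?_ ?_ α).mp hr
  · rw [hnum_v, hv0]
    simp [Int.even_add, Int.even_mul, h01, Int.not_even_iff_odd.mpr h00]
  · rw [hden_v, hv1]
    simp [Int.even_add, Int.even_mul, h10, Int.not_even_iff_odd.mpr h11]

/-- the Möbius actions of `H₀`, `H₁`, `H∞` preserve each parity class
`Q^(α)` of rational numbers (wherever defined). -/
theorem H_matrices_preserve_parity :
    ∀ H ∈ ({!![(-1 : ℤ), 2; 0, 1], !![(-1 : ℤ), 0; 0, 1], !![(1 : ℤ), 0; 2, -1]} :
        Set (Matrix (Fin 2) (Fin 2) ℤ)),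
      ∀ α : Fin 3, ∀ r : ℚ, QParity α r →
        ((H 1 0 : ℚ) * r + (H 1 1 : ℚ)) ≠ 0 →
        QParity α (((H 0 0 : ℚ) * r + (H 0 1 : ℚ)) / ((H 1 0 : ℚ) * r + (H 1 1 : ℚ))) := by
  intro H hH α r hr hne
  simp only [Set.mem_insert_iff, Set.mem_singleton_iff] at hH
  rcases hH with rfl | rfl | rfl <;>
    exact QParity.moebius (by simp [det_fin_two]) (by decide) (by decide) (by decide) (by decide)
      hr hne
end

section
/- For irrational x ∈ (0,1) with x = [0; a_1, a_2, …] and m = a_1 (the first partial quotient): if m is even, then J (H_1 H_∞)^{m/2} · x = 1/x − m, and if m is odd, then K J H_∞ (H_1 H_∞)^{(m−1)/2} · x = 1/x − m; in both cases the result is the Gauss map value G(x) = 1/x − ⌊1/x⌋. -/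
/-! The matrices of the statement are `H₁ = !![-1, 0; 0, 1]`, `H∞ = !![1, 0; 2, -1]`,
`J = !![0, 1; 1, 0]` and `K = !![-1, 1; 0, 1]`. Since `H₁ H∞ = -!![1, 0; -2, 1]`, its powers are
`±` a unipotent matrix, and both `J (H₁ H∞)^k` and `K J H∞ (H₁ H∞)^k` come out as
`±!![-n, 1; 1, 0]`, which acts by `x ↦ 1/x - n`, with `n = 2k` resp. `n = 2k + 1`. -/

noncomputable def moebius (M : Matrix (Fin 2) (Fin 2) ℤ) (x : ℝ) : ℝ :=
  ((M 0 0 : ℝ) * x + (M 0 1 : ℝ)) / ((M 1 0 : ℝ) * x + (M 1 1 : ℝ))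

lemma moebius_inv_sub {s : ℤ} (hs : s ≠ 0) (n : ℤ) {x : ℝ} (hx : x ≠ 0) :
    moebius !![-(s * n), s; s, 0] x = 1 / x - n := by
  have hs' : (s : ℝ) ≠ 0 := Int.cast_ne_zero.mpr hs
  simp only [moebius, Matrix.of_apply, Matrix.cons_val', Matrix.cons_val_zero,
    Matrix.cons_val_one, Matrix.empty_val', Matrix.cons_val_fin_one, Int.cast_neg,
    Int.cast_mul, Int.cast_zero, add_zero]
  field_simp
  ring

lemma H₁_mul_Hinf_pow (k : ℕ) :
    (!![(-1 : ℤ), 0; 0, 1] * !![(1 : ℤ), 0; 2, -1]) ^ k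
      = !![(-1) ^ k, 0; -((-1) ^ k * (2 * k : ℤ)), (-1) ^ k] := by
  induction k with
  | zero => simp [Matrix.one_fin_two]
  | succ k ih =>
    rw [pow_succ, ih]
    ext i j
    fin_cases i <;> fin_cases j <;> simp [pow_succ]
    ring

lemma J_mul_H₁_mul_Hinf_pow (k : ℕ) :
    !![(0 : ℤ), 1; 1, 0] * (!![(-1 : ℤ), 0; 0, 1] * !![(1 : ℤ), 0; 2, -1]) ^ k
      = !![-((-1) ^ k * (2 * k : ℤ)), (-1) ^ k; (-1) ^ k, 0] := by
  rw [H₁_mul_Hinf_pow]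
  ext i j
  fin_cases i <;> fin_cases j <;> simp

lemma K_mul_J_mul_Hinf_mul_H₁_mul_Hinf_pow (k : ℕ) :
    !![(-1 : ℤ), 1; 0, 1] * !![(0 : ℤ), 1; 1, 0] * !![(1 : ℤ), 0; 2, -1] *
      (!![(-1 : ℤ), 0; 0, 1] * !![(1 : ℤ), 0; 2, -1]) ^ k
      = !![-((-1) ^ k * (2 * k + 1 : ℤ)), (-1) ^ k; (-1) ^ k, 0] := by
  rw [H₁_mul_Hinf_pow]
  ext i j
  fin_cases i <;> fin_cases j <;> simp
  ring

theorem gauss_map_matrices_general (x : ℝ) (h0 : 0 < x)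
    (m : ℤ) (hm : m = ⌊1 / x⌋) :
    (Even m →
      moebius (!![(0 : ℤ), 1; 1, 0] *
        (!![(-1 : ℤ), 0; 0, 1] * !![(1 : ℤ), 0; 2, -1]) ^ (m.toNat / 2)) x
        = 1 / x - (m : ℝ)) ∧
    (Odd m →
      moebius (!![(-1 : ℤ), 1; 0, 1] * !![(0 : ℤ), 1; 1, 0] * !![(1 : ℤ), 0; 2, -1] *
        (!![(-1 : ℤ), 0; 0, 1] * !![(1 : ℤ), 0; 2, -1]) ^ ((m.toNat - 1) / 2)) x
        = 1 / x - (m : ℝ)) ∧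
    1 / x - (m : ℝ) = 1 / x - (⌊1 / x⌋ : ℝ) := by
  have hm0 : 0 ≤ m := hm ▸ Int.floor_nonneg.mpr (by positivity)
  have hsign (k : ℕ) : (-1 : ℤ) ^ k ≠ 0 := pow_ne_zero k (by norm_num)
  refine ⟨fun ⟨r, hr⟩ => ?_, fun ⟨r, hr⟩ => ?_, by rw [hm]⟩
  · have hk : (2 * (m.toNat / 2 : ℕ) : ℤ) = m := by omega
    rw [J_mul_H₁_mul_Hinf_pow, moebius_inv_sub (hsign _) _ h0.ne', hk]
  · have hk : (2 * ((m.toNat - 1) / 2 : ℕ) + 1 : ℤ) = m := by omega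
    rw [K_mul_J_mul_Hinf_mul_H₁_mul_Hinf_pow, moebius_inv_sub (hsign _) _ h0.ne', hk]

/-- for irrational `x ∈ (0,1)` with first partial quotient `m = ⌊1/x⌋`,
the Gauss map value `1/x − m = 1/x − ⌊1/x⌋` is realized by `J (H₁H∞)^{m/2}` for even
`m` and by `KJH∞ (H₁H∞)^{(m−1)/2}` for odd `m`. -/
theorem gauss_map_matrices (x : ℝ) (hx : Irrational x) (h0 : 0 < x) (h1 : x < 1)
    (m : ℤ) (hm : m = ⌊1 / x⌋) :
    (Even m →
      moebius (!![(0 : ℤ), 1; 1, 0] *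
        (!![(-1 : ℤ), 0; 0, 1] * !![(1 : ℤ), 0; 2, -1]) ^ (m.toNat / 2)) x
        = 1 / x - (m : ℝ)) ∧
    (Odd m →
      moebius (!![(-1 : ℤ), 1; 0, 1] * !![(0 : ℤ), 1; 1, 0] * !![(1 : ℤ), 0; 2, -1] *
        (!![(-1 : ℤ), 0; 0, 1] * !![(1 : ℤ), 0; 2, -1]) ^ ((m.toNat - 1) / 2)) x
        = 1 / x - (m : ℝ)) ∧
    1 / x - (m : ℝ) = 1 / x - (⌊1 / x⌋ : ℝ) :=
  gauss_map_matrices_general x h0 m hm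
end
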